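/- The number of parking functions of length n with no fixed points equals (n^(n+1) + (-1)^n)/(n+1)^2. -/

import Mathlib

/-- A parking function of length `n`. -/
def IsParkingFunction (n : ℕ) (π : Fin n → ℕ) : Prop :=
  (∀ i, 1 ≤ π i) ∧ ∃ σ : Equiv.Perm (Fin n),
    Monotone (π ∘ σ) ∧ ∀ i : Fin n, π (σ i) ≤ (i : ℕ) + 1

/-!
The values of a parking function of length `n` lie in `[1, n]`, so we read them as residues
modulo `n + 1`; being a parking function only depends on the multiset of values. Pollak's
argument: for every multiset `s` of `n` residues exactly one translate `s - c` parks. Indeed the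
walk `r ↦ #{elements of s among the residues 1, …, r} - r` loses one unit per period `n + 1`, and
by the cycle lemma it has exactly one starting point per period from which it stays weakly above
its starting value for a whole period.

By inclusion–exclusion over sets `I` of prescribed fixed points, the number of fixed-point-free
parking functions is `∑ₖ (-1)ᵏ aₖ`, where `aₖ` counts parking functions together with a `k`-set
of their fixed points. Translated by `c`, such a pair is recorded by the `k`-set `I + 1 + c` and
the other `n - k` translated values; by Pollak's lemma every `k`-subset of `ZMod (n + 1)` with
`n - k` further values arises for exactly one `c`, so `(n + 1) aₖ = C(n + 1, k) (n + 1)^(n - k)`,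
and the binomial theorem finishes.
-/

open Finset

lemma Multiset.countP_eq_sum_count {α : Type*} [Fintype α] [DecidableEq α] (s : Multiset α)
    (p : α → Prop) [DecidablePred p] : s.countP p = ∑ z with p z, s.count z := by
  rw [countP_eq_card_filter, ← sum_count_eq_card (s := univ) (fun _ _ => mem_univ _), sum_filter]
  simp only [count_filter]

lemma ZMod.sum_range_add_natCast {N : ℕ} [NeZero N] {M : Type*} [AddCommMonoid M]
    (g : ZMod N → M) (a : ZMod N) : ∑ j ∈ range N, g (a + j) = ∑ z, g z :=
  calc ∑ j ∈ range N, g (a + j) = ∑ z, g (a + z) :=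
        sum_nbij' (fun j => (j : ZMod N)) ZMod.val (by simp) (fun z _ => mem_range.2 z.val_lt)
          (fun j hj => ZMod.val_cast_of_lt (mem_range.1 hj)) (fun z _ => ZMod.natCast_zmod_val z)
          (fun _ _ => rfl)
    _ = ∑ z, g z := Equiv.sum_comp (Equiv.addLeft a) g

lemma existsUnique_lt_forall_le_add {N : ℕ} (f : ℕ → ℤ) (hf : ∀ r, f (r + N) = f r - 1) :
    ∃! a, a < N ∧ ∀ t < N, f a ≤ f (a + t) := by
  classical
  have hN : N ≠ 0 := by
    rintro rfl
    linarith [hf 0]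
  have hmin : ∃ a, a < N ∧ ∀ b < N, f a ≤ f b := by
    obtain ⟨a, ha, hmin⟩ := (range N).exists_min_image f (nonempty_range_iff.2 hN)
    exact ⟨a, mem_range.1 ha, fun b hb => hmin b (mem_range.2 hb)⟩
  refine existsUnique_of_exists_of_unique ⟨Nat.find hmin, (Nat.find_spec hmin).1, fun t ht => ?_⟩ ?_
  · obtain ⟨ha, hle⟩ := Nat.find_spec hmin
    by_cases h : Nat.find hmin + t < N
    · exact hle _ h
    -- `a + t - N` comes before the first minimiser, so its value is strictly larger
    have hnot := Nat.find_min hmin (m := Nat.find hmin + t - N) (by omega)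
    push Not at hnot
    obtain ⟨b, hb, hlt⟩ := hnot (by omega)
    rw [show Nat.find hmin + t = Nat.find hmin + t - N + N by omega, hf]
    linarith [hle b hb]
  · suffices ∀ a b, a < b → b < N → (∀ t < N, f a ≤ f (a + t)) → ¬ ∀ t < N, f b ≤ f (b + t) by
      rintro a b ⟨ha, hfa⟩ ⟨hb, hfb⟩
      rcases lt_trichotomy a b with h | h | h
      exacts [absurd hfb (this a b h hb hfa), h, absurd hfa (this b a h ha hfb)]
    intro a b hab hb hfa hfb
    have h1 := hfa (b - a) (by omega)
    have h2 := hfb (a + N - b) (by omega)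
    rw [Nat.add_sub_cancel' hab.le] at h1
    rw [show b + (a + N - b) = a + N by omega, hf] at h2
    linarith

lemma card_filter_eq_empty_eq_sum {α β : Type*} [Fintype β] [DecidableEq β] (A : Finset α)
    (f : α → Finset β) :
    (#{a ∈ A | f a = ∅} : ℤ) = ∑ I : Finset β, (-1 : ℤ) ^ #I * (#{a ∈ A | I ⊆ f a} : ℤ) := by
  simp only [card_filter, Nat.cast_sum, Nat.cast_ite, Nat.cast_one, Nat.cast_zero, mul_sum,
    mul_ite, mul_one, mul_zero]
  rw [sum_comm]
  refine sum_congr rfl fun a _ => ?_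
  rw [← sum_filter, ← sum_powerset_neg_one_pow_card]
  congr 1
  ext I
  simp

lemma sum_range_neg_one_pow_mul_pow_mul_choose (n : ℕ) :
    ∑ k ∈ range (n + 1), (-1 : ℤ) ^ k * ((n : ℤ) + 1) ^ (n + 1 - k) * (n + 1).choose k =
      (n : ℤ) ^ (n + 1) + (-1) ^ n := by
  have h := add_pow (-1 : ℤ) ((n : ℤ) + 1) (n + 1)
  rw [sum_range_succ, Nat.sub_self, pow_zero, Nat.choose_self,
    show (-1 : ℤ) + (n + 1) = n by ring] at h
  linear_combination -h

lemma isParkingFunction_iff_le_card_filter (n : ℕ) (π : Fin n → ℕ) :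
    IsParkingFunction n π ↔ ∀ t ≤ n, t ≤ #{i | π i ∈ Icc 1 t} := by
  constructor
  · rintro ⟨hpos, σ, -, hle⟩ t ht
    calc t = #{j : Fin n | (j : ℕ) < t} := by rw [Fin.card_filter_val_lt, min_eq_right ht]
      _ ≤ #{i | π i ∈ Icc 1 t} := by
        refine card_le_card_of_injOn σ (fun j hj => ?_) σ.injective.injOn
        simp only [coe_filter, mem_univ, true_and, Set.mem_ofPred_eq, mem_Icc] at hj ⊢
        exact ⟨hpos _, (hle j).trans hj⟩
  · intro h
    have hall : #{i | π i ∈ Icc 1 n} = #(univ : Finset (Fin n)) :=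
      le_antisymm (card_filter_le _ _)
        (by simpa only [card_univ, Fintype.card_fin] using h n le_rfl)
    have hmono : Monotone (π ∘ Tuple.sort π) := Tuple.monotone_sort π
    generalize Tuple.sort π = σ at hmono
    refine ⟨fun i => (mem_Icc.1 (card_filter_eq_iff.1 hall i (mem_univ i))).1, σ, hmono,
      fun j => ?_⟩
    by_contra! hj
    have hlt : #{i | π i ∈ Icc 1 ((j : ℕ) + 1)} ≤ #{k : Fin n | (k : ℕ) < j} := by
      refine card_le_card_of_injOn σ.symm (fun i hi => ?_) σ.symm.injective.injOn
      simp only [coe_filter, mem_univ, true_and, Set.mem_ofPred_eq, mem_Icc] at hi ⊢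
      by_contra! hji
      have := hmono (show j ≤ σ.symm i from hji)
      simp only [Function.comp_apply, Equiv.apply_symm_apply] at this
      omega
    rw [Fin.card_filter_val_lt] at hlt
    have := h (j + 1) j.isLt
    omega

variable {n : ℕ}

lemma IsParkingFunction.le {π : Fin n → ℕ} (h : IsParkingFunction n π) (i : Fin n) : π i ≤ n := by
  obtain ⟨-, σ, -, hle⟩ := h
  have := hle (σ.symm i)
  rw [Equiv.apply_symm_apply] at this
  omega

-- The residue `0` plays the role of the empty spot; the case `t = n` forces `0 ∉ s`
-- when `s` has `n` elements.
def IsParking (s : Multiset (ZMod (n + 1))) : Prop :=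
  ∀ t ≤ n, t ≤ s.countP (fun z => z.val ∈ Icc 1 t)

instance : DecidablePred (IsParking (n := n)) := fun _ => by unfold IsParking; infer_instance

lemma isParkingFunction_val_iff (w : Fin n → ZMod (n + 1)) :
    IsParkingFunction n (fun i => (w i).val) ↔ IsParking (univ.val.map w) := by
  simp only [isParkingFunction_iff_le_card_filter, IsParking, Multiset.countP_map, ← filter_val,
    card_val]

lemma IsParking.zero_notMem {s : Multiset (ZMod (n + 1))} (hs : IsParking s)
    (hcard : Multiset.card s ≤ n) : (0 : ZMod (n + 1)) ∉ s := by
  intro h0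
  have hall := Multiset.countP_eq_card.1
    (le_antisymm (Multiset.countP_le_card _ _) (hcard.trans (hs n le_rfl)))
  simpa using hall 0 h0

lemma countP_map_sub_val_mem_Icc (s : Multiset (ZMod (n + 1))) (c : ZMod (n + 1)) {t : ℕ}
    (ht : t ≤ n) :
    (s.map (· - c)).countP (fun z => z.val ∈ Icc 1 t) =
      ∑ j ∈ range t, s.count (c + (j + 1 : ℕ)) := by
  rw [Multiset.countP_map, ← Multiset.countP_eq_card_filter, Multiset.countP_eq_sum_count]
  refine sum_nbij' (fun z => (z - c).val - 1) (fun j => c + (j + 1 : ℕ)) ?_ ?_ ?_ ?_ ?_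
  · intro z hz
    simp only [mem_filter, mem_univ, true_and, mem_Icc] at hz
    simp only [mem_range]
    omega
  · intro j hj
    simp only [mem_range] at hj
    simp only [mem_filter, mem_univ, true_and, mem_Icc, add_sub_cancel_left]
    rw [ZMod.val_cast_of_lt (by omega)]
    omega
  · intro z hz
    simp only [mem_filter, mem_univ, true_and, mem_Icc] at hz
    rw [Nat.sub_add_cancel hz.1, ZMod.natCast_zmod_val, add_sub_cancel]
  · intro j hj
    simp only [mem_range] at hj
    simp only [add_sub_cancel_left]
    rw [ZMod.val_cast_of_lt (by omega), Nat.add_sub_cancel]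
  · intro z hz
    rw [Nat.sub_add_cancel, ZMod.natCast_zmod_val, add_sub_cancel]
    simp only [mem_filter, mem_univ, true_and, mem_Icc] at hz
    exact hz.1

theorem existsUnique_isParking_map_sub (s : Multiset (ZMod (n + 1))) (hs : Multiset.card s = n) :
    ∃! c : ZMod (n + 1), IsParking (s.map (· - c)) := by
  set f : ℕ → ℤ := fun r => ∑ j ∈ range r, ((s.count ((j + 1 : ℕ) : ZMod (n + 1)) : ℤ) - 1)
  have hf_add : ∀ a t, f (a + t) =
      f a + ∑ j ∈ range t, ((s.count ((a : ZMod (n + 1)) + (j + 1 : ℕ)) : ℤ) - 1) := by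
    intro a t
    simp only [f, sum_range_add]
    push_cast
    simp only [add_assoc]
  have hf_period : ∀ r, f (r + (n + 1)) = f r - 1 := by
    intro r
    have hsum : ∑ j ∈ range (n + 1), s.count ((r : ZMod (n + 1)) + (j + 1 : ℕ)) = n := by
      conv_rhs => rw [← hs, ← Multiset.sum_count_eq_card (fun _ _ => mem_univ _),
        ← ZMod.sum_range_add_natCast _ ((r + 1 : ℕ) : ZMod (n + 1))]
      push_cast
      simp only [add_assoc, add_comm (1 : ZMod (n + 1))]
    rw [hf_add, sum_sub_distrib, ← Nat.cast_sum, hsum, sum_const, card_range]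
    simp only [nsmul_eq_mul, mul_one, Nat.cast_add, Nat.cast_one]
    ring
  have hiff : ∀ c : ZMod (n + 1),
      IsParking (s.map (· - c)) ↔ ∀ t < n + 1, f c.val ≤ f (c.val + t) := by
    intro c
    refine forall_congr' fun t => ?_
    rw [Nat.lt_succ_iff]
    refine imp_congr_right fun ht => ?_
    rw [countP_map_sub_val_mem_Icc s c ht, hf_add, ZMod.natCast_zmod_val, sum_sub_distrib]
    simp only [sum_const, card_range, nsmul_eq_mul, mul_one, le_add_iff_nonneg_right, sub_nonneg]
    norm_cast
  obtain ⟨a, ⟨ha, hmin⟩, huniq⟩ := existsUnique_lt_forall_le_add f hf_period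
  refine ⟨a, (hiff _).2 (by rwa [ZMod.val_cast_of_lt ha]), fun c hc => ?_⟩
  rw [← huniq c.val ⟨c.val_lt, (hiff c).1 hc⟩, ZMod.natCast_zmod_val]

theorem succ_mul_sum_card_isParking {k m : ℕ} (hkm : k + m = n) :
    (n + 1) * ∑ S ∈ powersetCard k (univ : Finset (ZMod (n + 1))),
        #{h : Fin m → ZMod (n + 1) | IsParking (S.val + univ.val.map h)} =
      (n + 1).choose k * (n + 1) ^ m := by
  have hshift : ∀ c : ZMod (n + 1),
      ∑ S ∈ powersetCard k univ, #{h : Fin m → ZMod (n + 1) | IsParking (S.val + univ.val.map h)} =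
        ∑ S ∈ powersetCard k univ,
          #{h : Fin m → ZMod (n + 1) | IsParking ((S.val + univ.val.map h).map (· - c))} := by
    intro c
    refine sum_equiv (Equiv.finsetCongr (Equiv.addRight c)) (by simp) fun S _ => ?_
    refine card_equiv (Equiv.addRight fun _ => c) fun h => ?_
    simp [Multiset.map_add, Multiset.map_map, Function.comp_def]
  calc (n + 1) * ∑ S ∈ powersetCard k univ,
          #{h : Fin m → ZMod (n + 1) | IsParking (S.val + univ.val.map h)}
      = ∑ c : ZMod (n + 1), ∑ S ∈ powersetCard k univ,
          #{h : Fin m → ZMod (n + 1) | IsParking ((S.val + univ.val.map h).map (· - c))} := by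
        rw [← sum_congr rfl fun c _ => hshift c, sum_const, card_univ, ZMod.card, smul_eq_mul]
    _ = ∑ S ∈ powersetCard k univ, ∑ h : Fin m → ZMod (n + 1),
          #{c | IsParking ((S.val + univ.val.map h).map (· - c))} := by
        simp only [card_filter]
        rw [sum_comm]
        exact sum_congr rfl fun S _ => sum_comm
    _ = ∑ S ∈ powersetCard k univ, ∑ h : Fin m → ZMod (n + 1), 1 := by
        refine sum_congr rfl fun S hS => sum_congr rfl fun h _ => ?_
        refine (Fintype.existsUnique_iff_card_one _).1 (existsUnique_isParking_map_sub _ ?_)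
        simp [(mem_powersetCard.1 hS).2, hkm]
    _ = (n + 1).choose k * (n + 1) ^ m := by simp

def succEmbZMod (n : ℕ) : Fin n ↪ ZMod (n + 1) :=
  ⟨fun i => ((i + 1 : ℕ) : ZMod (n + 1)), fun i j h => by
    have := congrArg ZMod.val h
    rwa [ZMod.val_cast_of_lt (by omega), ZMod.val_cast_of_lt (by omega), add_left_inj,
      Fin.val_inj] at this⟩

def fixedPoints (w : Fin n → ZMod (n + 1)) : Finset (Fin n) := {i | w i = succEmbZMod n i}

lemma mem_fixedPoints_iff {w : Fin n → ZMod (n + 1)} {i : Fin n} :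
    i ∈ fixedPoints w ↔ (w i).val = i + 1 := by
  have hlt : (i : ℕ) + 1 < n + 1 := by omega
  rw [fixedPoints, mem_filter, and_iff_right (mem_univ i)]
  constructor
  · intro h
    rw [h]
    exact ZMod.val_cast_of_lt hlt
  · intro h
    rw [← ZMod.natCast_zmod_val (w i), h]
    rfl

lemma map_univ_val_eq_add {w : Fin n → ZMod (n + 1)} {I : Finset (Fin n)}
    (hI : I ⊆ fixedPoints w) {m : ℕ} (hm : #Iᶜ = m) :
    univ.val.map w = (I.map (succEmbZMod n)).val + univ.val.map (w ∘ Iᶜ.orderEmbOfFin hm) := by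
  have hsplit : (univ : Finset (Fin n)).val = I.val + Iᶜ.val := by
    rw [← union_compl I, ← disjUnion_eq_union _ _ disjoint_compl_right]
    rfl
  rw [hsplit, Multiset.map_add, map_val]
  congr 1
  · exact Multiset.map_congr rfl fun i hi => (mem_filter.1 (hI hi)).2
  · conv_lhs => rw [← map_orderEmbOfFin_univ Iᶜ hm]
    rw [map_val, Multiset.map_map]
    rfl

lemma card_isParking_subset_fixedPoints {I : Finset (Fin n)} {m : ℕ} (hm : #Iᶜ = m) :
    #{w : Fin n → ZMod (n + 1) | IsParking (univ.val.map w) ∧ I ⊆ fixedPoints w} =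
      #{h : Fin m → ZMod (n + 1) | IsParking ((I.map (succEmbZMod n)).val + univ.val.map h)} := by
  set e := Iᶜ.orderEmbOfFin hm
  have he : ∀ i, (∃ j, e j = i) ↔ i ∉ I := fun i => by
    rw [← Set.mem_range, range_orderEmbOfFin, coe_compl, Set.mem_compl_iff, mem_coe]
  have hext : ∀ h : Fin m → ZMod (n + 1), I ⊆ fixedPoints (Function.extend e h (succEmbZMod n)) :=
    fun h i hi => mem_filter.2 ⟨mem_univ i,
      Function.extend_apply' _ _ _ fun hi' => (he i).1 hi' hi⟩
  refine card_nbij' (· ∘ e) (fun h => Function.extend e h (succEmbZMod n)) ?_ ?_ ?_ ?_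
  · intro w hw
    simp only [coe_filter, mem_univ, true_and, Set.mem_ofPred_eq] at hw ⊢
    rw [← map_univ_val_eq_add hw.2 hm]
    exact hw.1
  · intro h hh
    simp only [coe_filter, mem_univ, true_and, Set.mem_ofPred_eq] at hh ⊢
    refine ⟨?_, hext h⟩
    rwa [map_univ_val_eq_add (hext h) hm, Function.extend_comp e.injective]
  · intro w hw
    simp only [coe_filter, mem_univ, true_and, Set.mem_ofPred_eq] at hw
    funext i
    dsimp only
    by_cases hi : i ∈ I
    · rw [Function.extend_apply' _ _ _ fun hi' => (he i).1 hi' hi]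
      exact (mem_filter.1 (hw.2 hi)).2.symm
    · obtain ⟨j, rfl⟩ := (he i).2 hi
      exact e.injective.extend_apply _ _ j
  · intro h _
    exact Function.extend_comp e.injective _ _

lemma sum_powersetCard_map_succEmbZMod {k m : ℕ} (hkm : k + m = n) :
    ∑ I ∈ powersetCard k (univ : Finset (Fin n)),
        #{h : Fin m → ZMod (n + 1) | IsParking ((I.map (succEmbZMod n)).val + univ.val.map h)} =
      ∑ S ∈ powersetCard k (univ : Finset (ZMod (n + 1))),
        #{h : Fin m → ZMod (n + 1) | IsParking (S.val + univ.val.map h)} := by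
  have hmap : ∑ I ∈ powersetCard k (univ : Finset (Fin n)),
        #{h : Fin m → ZMod (n + 1) | IsParking ((I.map (succEmbZMod n)).val + univ.val.map h)} =
      ∑ S ∈ powersetCard k (univ.map (succEmbZMod n)),
        #{h : Fin m → ZMod (n + 1) | IsParking (S.val + univ.val.map h)} := by
    rw [powersetCard_map, sum_map]
    rfl
  rw [hmap]
  refine sum_subset (powersetCard_mono (subset_univ _)) fun S hS hS' => ?_
  obtain ⟨hSsub, hScard⟩ := mem_powersetCard.1 hS
  -- `succEmbZMod n` misses only `0`, and a parking multiset of size `n` avoids `0`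
  obtain ⟨z, hzS, hz⟩ := not_subset.1 fun hsub => hS' (mem_powersetCard.2 ⟨hsub, hScard⟩)
  have hz0 : z = 0 := by
    by_contra hz0
    have hval : z.val ≠ 0 := by rwa [ne_eq, ZMod.val_eq_zero]
    refine hz (mem_map.2 ⟨⟨z.val - 1, by have := z.val_lt; omega⟩, mem_univ _, ?_⟩)
    change ((z.val - 1 + 1 : ℕ) : ZMod (n + 1)) = z
    rw [Nat.sub_add_cancel (Nat.one_le_iff_ne_zero.2 hval), ZMod.natCast_zmod_val]
  rw [card_eq_zero, filter_eq_empty_iff]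
  intro h _ hP
  refine hP.zero_notMem (by simp [hScard, hkm]) (Multiset.mem_add.2 (Or.inl ?_))
  rw [← hz0]
  exact hzS

theorem card_isParking_fixedPoints_eq_empty_mul (n : ℕ) :
    (#{w : Fin n → ZMod (n + 1) | IsParking (univ.val.map w) ∧ fixedPoints w = ∅} : ℤ) *
      ((n : ℤ) + 1) ^ 2 = (n : ℤ) ^ (n + 1) + (-1) ^ n := by
  have hterm : ∀ k ∈ range (n + 1), ((n : ℤ) + 1) *
      ∑ I ∈ powersetCard k (univ : Finset (Fin n)),
        (#{w : Fin n → ZMod (n + 1) | IsParking (univ.val.map w) ∧ I ⊆ fixedPoints w} : ℤ) =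
      (n + 1).choose k * ((n : ℤ) + 1) ^ (n - k) := by
    intro k hk
    have hkm : k + (n - k) = n := by have := mem_range.1 hk; omega
    rw [sum_congr rfl fun I hI => congrArg Nat.cast (card_isParking_subset_fixedPoints
      (m := n - k) (by rw [card_compl, (mem_powersetCard.1 hI).2, Fintype.card_fin]))]
    rw [← Nat.cast_sum, sum_powersetCard_map_succEmbZMod hkm]
    exact_mod_cast succ_mul_sum_card_isParking hkm
  calc (#{w : Fin n → ZMod (n + 1) | IsParking (univ.val.map w) ∧ fixedPoints w = ∅} : ℤ) *
        ((n : ℤ) + 1) ^ 2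
      = ∑ k ∈ range (n + 1), (-1) ^ k * (((n : ℤ) + 1) *
          ∑ I ∈ powersetCard k (univ : Finset (Fin n)),
            (#{w : Fin n → ZMod (n + 1) | IsParking (univ.val.map w) ∧ I ⊆ fixedPoints w} : ℤ)) *
          ((n : ℤ) + 1) := by
        rw [← filter_filter, card_filter_eq_empty_eq_sum, ← powerset_univ, sum_powerset, card_univ,
          Fintype.card_fin, sum_mul]
        refine sum_congr rfl fun k _ => ?_
        rw [sum_congr rfl fun I hI => by rw [(mem_powersetCard.1 hI).2], ← mul_sum]
        simp only [filter_filter]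
        ring
    _ = ∑ k ∈ range (n + 1), (-1 : ℤ) ^ k * ((n : ℤ) + 1) ^ (n + 1 - k) * (n + 1).choose k := by
        refine sum_congr rfl fun k hk => ?_
        rw [hterm k hk, show n + 1 - k = n - k + 1 by have := mem_range.1 hk; omega, pow_succ]
        ring
    _ = (n : ℤ) ^ (n + 1) + (-1) ^ n := sum_range_neg_one_pow_mul_pow_mul_choose n

lemma ncard_setOf_isParkingFunction (n : ℕ) :
    {π : Fin n → ℕ | IsParkingFunction n π ∧ ∀ i : Fin n, π i ≠ (i : ℕ) + 1}.ncard =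
      #{w : Fin n → ZMod (n + 1) | IsParking (univ.val.map w) ∧ fixedPoints w = ∅} := by
  have himage : {π : Fin n → ℕ | IsParkingFunction n π ∧ ∀ i : Fin n, π i ≠ (i : ℕ) + 1} =
      (fun (w : Fin n → ZMod (n + 1)) i => (w i).val) ''
        ↑({w | IsParking (univ.val.map w) ∧ fixedPoints w = ∅} :
          Finset (Fin n → ZMod (n + 1))) := by
    ext π
    simp only [Set.mem_ofPred_eq, coe_filter, mem_univ, true_and, Set.mem_image,
      eq_empty_iff_forall_notMem, mem_fixedPoints_iff]
    constructor
    · rintro ⟨hπ, hfix⟩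
      have hval : (fun i => ((π i : ZMod (n + 1))).val) = π :=
        funext fun i => ZMod.val_cast_of_lt (Nat.lt_succ_of_le (hπ.le i))
      refine ⟨fun i => π i, ⟨?_, fun i => ?_⟩, hval⟩
      · rw [← isParkingFunction_val_iff, hval]
        exact hπ
      · rw [congrFun hval i]
        exact hfix i
    · rintro ⟨w, ⟨hw, hfix⟩, rfl⟩
      exact ⟨(isParkingFunction_val_iff w).2 hw, hfix⟩
  rw [himage, Set.ncard_image_of_injective _ fun w w' h =>
    funext fun i => ZMod.val_injective _ (congrFun h i), Set.ncard_coe_finset]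

/-- The number of parking functions of length `n` with no fixed points is
`(n^(n+1) + (-1)^n)/(n+1)^2`. -/
theorem card_parkingFunctions_noFixedPoints (n : ℕ) :
    (Set.ncard {π : Fin n → ℕ | IsParkingFunction n π ∧
        ∀ i : Fin n, π i ≠ (i : ℕ) + 1} : ℚ) =
      ((n : ℚ) ^ (n + 1) + (-1 : ℚ) ^ n) / ((n : ℚ) + 1) ^ 2 := by
  rw [ncard_setOf_isParkingFunction, eq_div_iff (by positivity)]
  exact_mod_cast card_isParking_fixedPoints_eq_empty_mul n
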